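/- The generating function of b₂ is 2/((1+t)(1−2t)); equivalently, in the ring of formal power series over ℤ, (1+t)·(1−2t)·Σ_{k≥0} b₂(k)·t^k = 2. -/

import Mathlib

open Polynomial

/-- `a₁ n` : number of nonzero coefficients of `(1+x+x²)ⁿ` over `𝔽₂`. -/
noncomputable def a1 (n : ℕ) : ℕ :=
  (((1 + X + X ^ 2 : (ZMod 2)[X]) ^ n).support).card

/-- `a₂ n` : number of nonzero coefficients of `(1+x)(1+x+x²)ⁿ` over `𝔽₂`. -/
noncomputable def a2 (n : ℕ) : ℕ :=
  (((1 + X) * (1 + X + X ^ 2 : (ZMod 2)[X]) ^ n).support).card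

/-! Over `𝔽₂` the Frobenius gives `f ^ (2m+1) = f · f(x²) ^ m` for `f = 1 + x + x²`. Since
`(1 + x) f = 1 + x³` and `f = (1 + x²) + x`, the polynomials `(1 + x) f ^ (2m+1)` and `f ^ (2m+1)`
split into an even part and an odd part, each a known polynomial in `x²` up to a power of `x`, so
`a₂(2m+1) = 2 a₁(m)` and `a₁(2m+1) = a₂(m) + a₁(m)`. Taking `m = 2ᵏ - 1` yields the recurrence
`b₂(k+2) = b₂(k+1) + 2 b₂(k)` with `b₂(0) = b₂(1) = 2`, which is the generating function identity. -/

namespace Polynomial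

open Finset

theorem support_add_of_disjoint {R : Type*} [Semiring R] {f g : R[X]}
    (h : Disjoint f.support g.support) : (f + g).support = f.support ∪ g.support := by
  simpa [support] using! Finsupp.support_add_eq h

theorem support_X_pow_mul {R : Type*} [Semiring R] (c : ℕ) (f : R[X]) :
    (X ^ c * f).support = f.support.map (addLeftEmbedding c) := by
  ext n
  simp only [mem_support_iff, coeff_X_pow_mul', mem_map, addLeftEmbedding_apply]
  constructor
  · intro h
    split_ifs at h with hcn
    · exact ⟨n - c, h, by omega⟩
    · exact absurd rfl h
  · rintro ⟨m, hm, rfl⟩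
    simpa using hm

variable {R : Type*} [CommSemiring R] {p : ℕ}

theorem support_expand (hp : 0 < p) (f : R[X]) :
    (expand R p f).support = f.support.image (p * ·) := by
  ext n
  simp only [mem_support_iff, coeff_expand hp, mem_image]
  constructor
  · intro h
    split_ifs at h with hpn
    · exact ⟨n / p, h, Nat.mul_div_cancel' hpn⟩
    · exact absurd rfl h
  · rintro ⟨m, hm, rfl⟩
    simpa [Nat.mul_div_cancel_left m hp] using hm

theorem card_support_expand (hp : 0 < p) (f : R[X]) :
    #(expand R p f).support = #f.support := by
  rw [support_expand hp, card_image_of_injective _ (mul_right_injective₀ hp.ne')]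

theorem card_support_expand_add_X_pow_mul_expand (hp : 0 < p) {c : ℕ} (hc : ¬p ∣ c)
    (f g : R[X]) :
    #(expand R p f + X ^ c * expand R p g).support = #f.support + #g.support := by
  have hdisj : Disjoint (expand R p f).support (X ^ c * expand R p g).support := by
    simp only [support_X_pow_mul, support_expand hp, disjoint_left, mem_image, mem_map,
      addLeftEmbedding_apply]
    rintro _ ⟨a, -, rfl⟩ ⟨_, ⟨b, -, rfl⟩, hab⟩
    exact hc ((Nat.dvd_add_left (dvd_mul_right p b)).mp (hab ▸ dvd_mul_right p a))
  rw [support_add_of_disjoint hdisj, card_union_of_disjoint hdisj, support_X_pow_mul, card_map,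
    card_support_expand hp, card_support_expand hp]

theorem pow_mul_add_one_eq_mul_expand {q : ℕ} [Fact q.Prime] (f : (ZMod q)[X]) (m : ℕ) :
    f ^ (q * m + 1) = f * expand (ZMod q) q (f ^ m) := by
  rw [ZMod.expand_card, ← pow_mul, pow_succ, mul_comm, mul_comm m]

end Polynomial

theorem one_add_X_mul_one_add_X_add_X_sq {R : Type*} [CommRing R] [CharP R 2] :
    (1 + X) * (1 + X + X ^ 2 : R[X]) = 1 + X ^ 3 := by
  linear_combination (X + X ^ 2 : R[X]) * CharTwo.two_eq_zero (R := R[X])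

theorem a2_two_mul_add_one (m : ℕ) : a2 (2 * m + 1) = 2 * a1 m := by
  have h : (1 + X) * (1 + X + X ^ 2 : (ZMod 2)[X]) ^ (2 * m + 1)
      = expand (ZMod 2) 2 ((1 + X + X ^ 2) ^ m)
        + X ^ 3 * expand (ZMod 2) 2 ((1 + X + X ^ 2) ^ m) := by
    rw [pow_mul_add_one_eq_mul_expand, ← mul_assoc, one_add_X_mul_one_add_X_add_X_sq]
    ring
  rw [a2, a1, h, card_support_expand_add_X_pow_mul_expand two_pos (by decide)]
  ring

theorem a1_two_mul_add_one (m : ℕ) : a1 (2 * m + 1) = a2 m + a1 m := by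
  have h : (1 + X + X ^ 2 : (ZMod 2)[X]) ^ (2 * m + 1)
      = expand (ZMod 2) 2 ((1 + X) * (1 + X + X ^ 2) ^ m)
        + X ^ 1 * expand (ZMod 2) 2 ((1 + X + X ^ 2) ^ m) := by
    rw [pow_mul_add_one_eq_mul_expand, map_mul]
    simp only [map_add, map_one, expand_X]
    ring
  rw [a2, a1, h, card_support_expand_add_X_pow_mul_expand two_pos (by decide)]
  rfl

theorem a1_zero : a1 0 = 1 := by
  rw [a1, pow_zero, ← C_1, support_C one_ne_zero, Finset.card_singleton]

theorem a2_zero : a2 0 = 2 := by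
  have h : (1 + X : (ZMod 2)[X]) = C 1 * X ^ 0 + C 1 * X ^ 1 := by simp
  rw [a2, pow_zero, mul_one, h, card_support_binomial zero_ne_one one_ne_zero one_ne_zero]

theorem two_pow_succ_sub_one (k : ℕ) : 2 ^ (k + 1) - 1 = 2 * (2 ^ k - 1) + 1 := by
  have := Nat.one_le_two_pow (n := k)
  rw [pow_succ]
  omega

noncomputable def b2 (k : ℕ) : ℕ := a2 (2 ^ k - 1)

theorem b2_zero : b2 0 = 2 := a2_zero

theorem b2_one : b2 1 = 2 := by
  rw [b2, two_pow_succ_sub_one, a2_two_mul_add_one, pow_zero, Nat.sub_self, a1_zero]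

theorem b2_add_two (k : ℕ) : b2 (k + 2) = b2 (k + 1) + 2 * b2 k := by
  rw [b2, b2, b2, two_pow_succ_sub_one (k + 1), a2_two_mul_add_one, two_pow_succ_sub_one k,
    a1_two_mul_add_one, a2_two_mul_add_one]
  ring

namespace PowerSeries

theorem mul_mk_of_linear_recurrence {R : Type*} [CommRing R] (a c : R) {b : ℕ → R}
    (h : ∀ n, b (n + 2) = a * b (n + 1) + c * b n) :
    (1 - C a * X - C c * X ^ 2) * mk b = C (b 0) + C (b 1 - a * b 0) * X := by
  ext n
  rcases n with _ | _ | n <;>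
    simp [sub_mul, mul_assoc, coeff_C_mul, pow_two, coeff_succ_X_mul, h]

end PowerSeries

theorem b2_genfun :
    ((1 + PowerSeries.X) * (1 - 2 * PowerSeries.X)) *
        PowerSeries.mk (fun k => (a2 (2 ^ k - 1) : ℤ)) =
      (2 : PowerSeries ℤ) := by
  have hrec (n : ℕ) : (b2 (n + 2) : ℤ) = 1 * b2 (n + 1) + 2 * b2 n := by
    rw [b2_add_two]
    push_cast
    ring
  have hpoly : ((1 + PowerSeries.X) * (1 - 2 * PowerSeries.X) : PowerSeries ℤ)
      = 1 - PowerSeries.C 1 * PowerSeries.X - PowerSeries.C 2 * PowerSeries.X ^ 2 := by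
    simp only [map_one, map_ofNat]
    ring
  rw [hpoly]
  change _ * PowerSeries.mk (fun k => (b2 k : ℤ)) = _
  rw [PowerSeries.mul_mk_of_linear_recurrence 1 2 hrec, b2_zero, b2_one]
  simp
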